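/- For every n ≥ 1, p_2[h_n] = Σ_{a=0}^{n} (-1)^a s_{(2n-a, a)}, where (2n-a, a) denotes the partition of 2n with parts 2n-a ≥ a. -/

import Mathlib

open MvPolynomial

/-- The ring of symmetric functions, modeled as the polynomial ring
`ℚ[h₁, h₂, …]` in the complete homogeneous symmetric functions (variable `i`
corresponds to `h_{i+1}`). -/
abbrev SymF : Type := MvPolynomial ℕ ℚ

/-- The complete homogeneous symmetric function `h_n` as an element of `SymF`. -/
noncomputable def hh : ℕ → SymF
  | 0 => 1
  | n + 1 => X n

/-- The expression of `h_n` in terms of the power sums (in the polynomial ring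
`ℚ[p₁, p₂, …]`, variable `i` corresponding to `p_{i+1}`), via Newton's identity
`n·h_n = ∑_{i=1}^n p_i h_{n-i}`. -/
noncomputable def hInP : ℕ → MvPolynomial ℕ ℚ
  | 0 => 1
  | n + 1 =>
      ((n + 1 : ℚ))⁻¹ • ∑ i ∈ Finset.range (n + 1), X i * hInP (n - i)
  termination_by n => n
  decreasing_by omega

/-- The power sum symmetric function `p_n` as an element of `SymF`, via Newton's
identity `p_n = n·h_n - ∑_{i=1}^{n-1} p_i h_{n-i}`. -/
noncomputable def pSym : ℕ → SymF
  | 0 => 1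
  | n + 1 =>
      ((n : ℚ) + 1) • hh (n + 1) -
        ∑ i ∈ (Finset.range n).attach, pSym (i.1 + 1) * hh (n - i.1)
  termination_by n => n
  decreasing_by
    have h := Finset.mem_range.mp i.2
    omega

/-- The isomorphism expressing a symmetric function in the power sum basis. -/
noncomputable def toP : SymF →ₐ[ℚ] MvPolynomial ℕ ℚ :=
  aeval (fun i => hInP (i + 1))

/-- `psub k g = p_k[g]`, plethysm of a power sum with `g`: substitute `p_i ↦ p_{ik}`
in the power-sum expression of `g`. -/
noncomputable def psub (k : ℕ) (g : SymF) : SymF :=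
  aeval (fun i => pSym ((i + 1) * k)) (toP g)

/-- Plethysm `f[g]` of symmetric functions: substitute `p_k ↦ p_k[g]` in the
power-sum expression of `f`. -/
noncomputable def pleth (f g : SymF) : SymF :=
  aeval (fun i => psub (i + 1) g) (toP f)

/-- `h_z` for integer index: zero for negative `z`. -/
noncomputable def hZ (z : ℤ) : SymF := if 0 ≤ z then hh z.toNat else 0

/-- The Schur function of a partition given as a weakly decreasing list of parts,
defined by the Jacobi–Trudi determinant `s_λ = det(h_{λ_i - i + j})`. -/
noncomputable def schur (l : List ℕ) : SymF :=
  (Matrix.of fun i j : Fin l.length =>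
    hZ ((l.get i : ℤ) + (j : ℤ) - (i : ℤ))).det

/-- `z_λ` for the monomial `d` in the power sums: `∏_i i^{m_i} m_i!`. -/
def zQ (d : ℕ →₀ ℕ) : ℚ :=
  d.prod fun i m => ((i : ℚ) + 1) ^ m * (Nat.factorial m : ℚ)

/-- The Hall inner product, characterized by `⟨p_λ, p_μ⟩ = δ_{λμ} z_λ`, computed in
the power sum basis. -/
noncomputable def hall (f g : SymF) : ℚ :=
  ∑ d ∈ (toP f).support, zQ d * (toP f).coeff d * (toP g).coeff d

/-- The decreasingly sorted list of parts of a partition. -/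
def sortedParts {N : ℕ} (π : Nat.Partition N) : List ℕ :=
  (π.parts.sort (· ≤ ·)).reverse

/-! The plethysm `p₂[h_n]` is `h_n(x₁², x₂², …)`, and
`∑ₙ h_n(x²) t²ⁿ = ∏ᵢ (1 - xᵢ²t²)⁻¹ = H(-t) H(t)` for `H(t) = ∑ h_k tᵏ`, so `p₂[h_n]` is the
coefficient `∑_{a+b=2n} (-1)ᵃ h_a h_b` of `t²ⁿ` in `H(-t) H(t)`. As symmetric functions are
modelled without variables, this is checked through Newton's identities: they say `H' = P H` with
`P(t) = ∑ p_{k+1} tᵏ`, hence `G = H(-t) H(t)` satisfies `G' = (P(t) - P(-t)) G`, which on the even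
coefficients of `G` is Newton's recursion for `h_n` with each `p_i` replaced by `p_{2i}`.
On the other side, Jacobi–Trudi gives `s_{(2n-a,a)} = h_{2n-a} h_a - h_{2n-a+1} h_{a-1}`, and the
alternating sum of these folds up into the symmetric sum `∑_{a+b=2n} (-1)ᵃ h_a h_b`. -/

open Finset

theorem Finset.sum_range_two_mul {M : Type*} [AddCommMonoid M] (f : ℕ → M) (m : ℕ) :
    ∑ k ∈ range (2 * m), f k = ∑ i ∈ range m, (f (2 * i) + f (2 * i + 1)) := by
  induction m with
  | zero => simp
  | succ m ih =>
    rw [mul_add, mul_one, sum_range_succ, sum_range_succ, sum_range_succ, ih, add_assoc]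

theorem Finset.sum_range_two_mul_add_one_of_symm {M : Type*} [AddCommMonoid M] {f : ℕ → M}
    (n : ℕ) (hf : ∀ a ≤ 2 * n, f (2 * n - a) = f a) :
    ∑ a ∈ range (2 * n + 1), f a = ∑ a ∈ range (n + 1), f a + ∑ a ∈ range n, f a := by
  rw [show 2 * n + 1 = n + 1 + n by ring, sum_range_add, ← sum_range_reflect f n]
  refine congrArg _ (sum_congr rfl fun a ha => ?_)
  have := mem_range.mp ha
  rw [← hf (n - 1 - a) (by omega)]
  congr 1
  omega

theorem hh_newton (n : ℕ) :
    ((n : ℚ) + 1) • hh (n + 1) = ∑ i ∈ range (n + 1), pSym (i + 1) * hh (n - i) := by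
  rw [sum_range_succ, Nat.sub_self, pSym, sum_attach (range n) fun i => pSym (i + 1) * hh (n - i)]
  simp only [hh, mul_one]
  abel

theorem toP_hh (n : ℕ) : toP (hh n) = hInP n := by
  cases n <;> simp [hh, hInP, toP]

theorem toP_pSym_succ (n : ℕ) : toP (pSym (n + 1)) = X n := by
  induction n using Nat.strong_induction_on with
  | _ n ih =>
    have hsum : ∑ i ∈ (range n).attach, toP (pSym (i.1 + 1) * hh (n - i.1)) =
        ∑ i ∈ range n, X i * hInP (n - i) := by
      rw [← sum_attach (range n) fun i => X i * hInP (n - i)]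
      refine sum_congr rfl fun i _ => ?_
      rw [map_mul, ih i (mem_range.mp i.2), toP_hh]
    have hnewton : ((n : ℚ) + 1) • hInP (n + 1) = ∑ i ∈ range (n + 1), X i * hInP (n - i) := by
      rw [hInP, smul_smul, mul_inv_cancel₀ (by positivity), one_smul]
    rw [pSym, map_sub, map_smul, map_sum, toP_hh, hsum, hnewton, sum_range_succ, Nat.sub_self,
      hInP, mul_one, add_sub_cancel_left]

theorem pleth_pSym_succ (k : ℕ) (g : SymF) : pleth (pSym (k + 1)) g = psub (k + 1) g := by
  rw [pleth, toP_pSym_succ, aeval_X]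

theorem aeval_hInP_of_newton {A : Type*} [CommRing A] [Algebra ℚ A] (x u : ℕ → A)
    (h0 : u 0 = 1)
    (hrec : ∀ n : ℕ, ((n : ℚ) + 1) • u (n + 1) = ∑ i ∈ range (n + 1), x i * u (n - i)) (n : ℕ) :
    aeval x (hInP n) = u n := by
  induction n using Nat.strong_induction_on with
  | _ n ih =>
    match n with
    | 0 => rw [hInP, map_one, h0]
    | n + 1 =>
      have hsum : ∑ i ∈ range (n + 1), aeval x (X i * hInP (n - i)) =
          ∑ i ∈ range (n + 1), x i * u (n - i) :=
        sum_congr rfl fun i hi => by rw [map_mul, aeval_X, ih _ (by omega)]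
      rw [hInP, map_smul, map_sum, hsum, ← hrec, smul_smul, inv_mul_cancel₀ (by positivity),
        one_smul]

section GeneratingSeries

open PowerSeries

theorem PowerSeries.derivative_rescale {R : Type*} [CommSemiring R] (a : R) (f : R⟦X⟧) :
    d⁄dX R (rescale a f) = C a * rescale a (d⁄dX R f) := by
  refine PowerSeries.ext fun n => ?_
  simp only [coeff_derivative, coeff_rescale, coeff_C_mul, pow_succ]
  ring

noncomputable def hSeries : SymF⟦X⟧ := mk hh

noncomputable def pSeries : SymF⟦X⟧ := mk fun n => pSym (n + 1)

noncomputable def hAltSeries : SymF⟦X⟧ := rescale (-1) hSeries * hSeries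

theorem derivative_hSeries : d⁄dX SymF hSeries = pSeries * hSeries := by
  refine PowerSeries.ext fun n => ?_
  rw [coeff_derivative, PowerSeries.coeff_mul, Nat.sum_antidiagonal_eq_sum_range_succ_mk,
    hSeries, pSeries]
  simp only [coeff_mk]
  rw [← hh_newton, mul_comm, Algebra.smul_def, map_add, map_natCast, map_one]

theorem derivative_hAltSeries :
    d⁄dX SymF hAltSeries = (pSeries - rescale (-1) pSeries) * hAltSeries := by
  rw [hAltSeries, Derivation.leibniz, derivative_rescale, derivative_hSeries, map_mul]
  simp only [smul_eq_mul, map_neg, map_one]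
  ring

theorem coeff_hAltSeries (r : ℕ) :
    coeff r hAltSeries = ∑ a ∈ range (r + 1), (-1) ^ a * hh a * hh (r - a) := by
  simp only [hAltSeries, PowerSeries.coeff_mul, Nat.sum_antidiagonal_eq_sum_range_succ_mk,
    coeff_rescale, hSeries, coeff_mk, mul_assoc]

theorem coeff_sub_rescale_neg_one_pSeries (k : ℕ) :
    coeff k (pSeries - rescale (-1) pSeries) = (1 - (-1) ^ k) * pSym (k + 1) := by
  rw [map_sub, coeff_rescale, pSeries, coeff_mk]
  ring

theorem coeff_hAltSeries_newton (m : ℕ) :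
    ((m : ℚ) + 1) • coeff (2 * (m + 1)) hAltSeries =
      ∑ i ∈ range (m + 1), pSym ((i + 1) * 2) * coeff (2 * (m - i)) hAltSeries := by
  have h := congrArg (PowerSeries.coeff (2 * m + 1)) derivative_hAltSeries
  rw [coeff_derivative, PowerSeries.coeff_mul, Nat.sum_antidiagonal_eq_sum_range_succ_mk,
    Nat.succ_eq_add_one, show 2 * m + 1 + 1 = 2 * (m + 1) by ring, sum_range_two_mul] at h
  have hterm : ∀ i ∈ range (m + 1),
      (1 - (-1) ^ (2 * i)) * pSym (2 * i + 1) * coeff (2 * m + 1 - 2 * i) hAltSeries +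
        (1 - (-1) ^ (2 * i + 1)) * pSym (2 * i + 1 + 1) *
          coeff (2 * m + 1 - (2 * i + 1)) hAltSeries =
      2 * (pSym ((i + 1) * 2) * coeff (2 * (m - i)) hAltSeries) := by
    intro i hi
    rw [show 2 * i + 1 + 1 = (i + 1) * 2 by ring,
      show 2 * m + 1 - (2 * i + 1) = 2 * (m - i) by have := mem_range.mp hi; omega,
      pow_succ, pow_mul]
    ring
  simp only [coeff_sub_rescale_neg_one_pSeries] at h
  rw [sum_congr rfl hterm, ← mul_sum] at h
  refine mul_left_cancel₀ (two_ne_zero (α := SymF)) ?_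
  rw [← h, Algebra.smul_def]
  push_cast
  ring

end GeneratingSeries

theorem psub_two_hh (n : ℕ) : psub 2 (hh n) = PowerSeries.coeff (2 * n) hAltSeries := by
  rw [psub, toP_hh]
  refine aeval_hInP_of_newton _ (fun m => PowerSeries.coeff (2 * m) hAltSeries) ?_
    coeff_hAltSeries_newton n
  simp [coeff_hAltSeries, hh]

theorem hZ_natCast (k : ℕ) : hZ k = hh k := by
  simp [hZ]

theorem schur_pair (x y : ℕ) :
    schur [x, y] = hh x * hh y - hh (x + 1) * hZ ((y : ℤ) - 1) := by
  rw [schur, Matrix.det_fin_two]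
  simp only [Matrix.of_apply, List.get, Fin.val_zero, Fin.val_one, Nat.cast_zero, Nat.cast_one,
    add_zero, sub_zero, add_sub_cancel_right]
  rw [hZ_natCast, hZ_natCast, ← Nat.cast_succ, hZ_natCast]

theorem sum_neg_one_pow_mul_schur_pair (n : ℕ) :
    ∑ a ∈ range (n + 1), (-1 : SymF) ^ a * schur [2 * n - a, a] =
      PowerSeries.coeff (2 * n) hAltSeries := by
  have hsymm : ∀ a ≤ 2 * n,
      (-1 : SymF) ^ (2 * n - a) * hh (2 * n - a) * hh (2 * n - (2 * n - a)) =
        (-1) ^ a * hh a * hh (2 * n - a) := by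
    intro a ha
    rw [Nat.sub_sub_self ha, neg_one_pow_eq_pow_mod_two, neg_one_pow_eq_pow_mod_two (n := a),
      show (2 * n - a) % 2 = a % 2 by omega]
    ring
  have hshift : ∑ a ∈ range (n + 1), (-1 : SymF) ^ a * (hh (2 * n - a + 1) * hZ ((a : ℤ) - 1)) =
      -∑ a ∈ range n, (-1) ^ a * hh a * hh (2 * n - a) := by
    have hZ_neg_one : hZ (((0 : ℕ) : ℤ) - 1) = 0 := if_neg (by norm_num)
    rw [sum_range_succ', hZ_neg_one, mul_zero, mul_zero, add_zero, ← sum_neg_distrib]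
    refine sum_congr rfl fun a ha => ?_
    rw [Nat.cast_succ, add_sub_cancel_right, hZ_natCast,
      show 2 * n - (a + 1) + 1 = 2 * n - a by have := mem_range.mp ha; omega, pow_succ]
    ring
  rw [coeff_hAltSeries, sum_range_two_mul_add_one_of_symm
    (f := fun a => (-1 : SymF) ^ a * hh a * hh (2 * n - a)) n hsymm]
  simp only [schur_pair, mul_sub, sum_sub_distrib, hshift, sub_neg_eq_add]
  exact congrArg (· + _) (sum_congr rfl fun a _ => by ring)

theorem p2_pleth_hn (n : ℕ) :
    pleth (pSym 2) (hh n) =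
      ∑ a ∈ Finset.range (n + 1), (-1 : SymF) ^ a * schur [2 * n - a, a] :=
  calc pleth (pSym 2) (hh n) = psub 2 (hh n) := pleth_pSym_succ 1 (hh n)
    _ = PowerSeries.coeff (2 * n) hAltSeries := psub_two_hh n
    _ = _ := (sum_neg_one_pow_mul_schur_pair n).symm
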